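/- Let w be a weight sequence, H a separable complex Hilbert space, and A ∈ E_w(H) a non-normal operator with a Schur decomposition A = D + N whose quasi-nilpotent part N satisfies |N|_{ẇ̄} > 0. Let C > 0 be a constant such that ‖Q^{2k}‖ ≤ C^{2k}·(s_1(Q)⋯s_k(Q))² for every k ≥ 1 and every quasi-nilpotent compact operator Q on H. Then for every bounded operator B on H, d̂(σ(B),σ(A)) ≤ |N|_{ẇ̄} · H_w( ‖A−B‖ / |N|_{ẇ̄} ). -/

import Mathlib

open Filter Topology

noncomputable section

def IsWeight (w : ℕ → ℝ) : Prop :=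
  (∀ k, 1 ≤ k → w (k + 1) ≤ w k) ∧ (∀ k, 1 ≤ k → 0 ≤ w k) ∧
    Filter.Tendsto w Filter.atTop (nhds 0)

def sNum {H₁ H₂ : Type*} [NormedAddCommGroup H₁] [NormedSpace ℂ H₁]
    [NormedAddCommGroup H₂] [NormedSpace ℂ H₂] (k : ℕ) (A : H₁ →L[ℂ] H₂) : ℝ :=
  sInf {c : ℝ | ∃ F : H₁ →L[ℂ] H₂,
    Module.rank ℂ (LinearMap.range (F : H₁ →ₗ[ℂ] H₂)) < (k : Cardinal) ∧ c = ‖A - F‖}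

def MemE {H₁ H₂ : Type*} [NormedAddCommGroup H₁] [NormedSpace ℂ H₁]
    [NormedAddCommGroup H₂] [NormedSpace ℂ H₂] (w : ℕ → ℝ) (A : H₁ →L[ℂ] H₂) : Prop :=
  IsCompactOperator A ∧ ∃ M : ℝ, 0 ≤ M ∧ ∀ k, 1 ≤ k → sNum k A ≤ M * w k

def gaugeE {H₁ H₂ : Type*} [NormedAddCommGroup H₁] [NormedSpace ℂ H₁]
    [NormedAddCommGroup H₂] [NormedSpace ℂ H₂] (w : ℕ → ℝ) (A : H₁ →L[ℂ] H₂) : ℝ :=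
  sInf {M : ℝ | 0 ≤ M ∧ ∀ k, 1 ≤ k → sNum k A ≤ M * w k}

def dbl (w : ℕ → ℝ) (k : ℕ) : ℝ := w ((k + 1) / 2)

def gmean (w : ℕ → ℝ) (k : ℕ) : ℝ := (∏ n ∈ Finset.Icc 1 k, w n) ^ ((1 : ℝ) / (k : ℝ))

def algMult {H : Type*} [NormedAddCommGroup H] [NormedSpace ℂ H] (A : H →L[ℂ] H) (z : ℂ) : ℕ :=
  Module.finrank ℂ (Module.End.maxGenEigenspace (A : H →ₗ[ℂ] H) z)

def IsEigSeq {H : Type*} [NormedAddCommGroup H] [NormedSpace ℂ H]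
    (A : H →L[ℂ] H) (lam : ℕ → ℂ) : Prop :=
  (∀ k, 1 ≤ k → ‖lam (k + 1)‖ ≤ ‖lam k‖) ∧
  ∀ z : ℂ, z ≠ 0 →
    {k : ℕ | 1 ≤ k ∧ lam k = z}.Finite ∧ {k : ℕ | 1 ≤ k ∧ lam k = z}.ncard = algMult A z

def IsSchurDecomp {H : Type*} [NormedAddCommGroup H] [InnerProductSpace ℂ H] [CompleteSpace H]
    (A D N : H →L[ℂ] H) : Prop :=
  A = D + N ∧ IsCompactOperator D ∧ IsCompactOperator N ∧ IsStarNormal D ∧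
  (∀ z : ℂ, z ≠ 0 → algMult D z = algMult A z) ∧
  spectrum ℂ D = spectrum ℂ A ∧
  spectrum ℂ N = {0} ∧
  ∀ z : ℂ, z ∉ spectrum ℂ A →
    spectrum ℂ (Ring.inverse (algebraMap ℂ (H →L[ℂ] H) z - D) * N) = {0}

def Fw (C : ℝ) (w : ℕ → ℝ) (r : ℝ) : ℝ :=
  (1 + r * w 1) *
    (1 + ∑' k : ℕ, (∏ n ∈ Finset.Icc 1 (k + 1), w n) ^ 2 * (C * r) ^ (2 * (k + 1)))

def Ftilde (C : ℝ) (w : ℕ → ℝ) (r : ℝ) : ℝ := r * Fw C w r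

def specVar (s t : Set ℂ) : ℝ := ⨆ z : s, Metric.infDist (z : ℂ) t

def hausD (s t : Set ℂ) : ℝ := max (specVar s t) (specVar t s)

def pseudoSpec {H : Type*} [NormedAddCommGroup H] [NormedSpace ℂ H] [CompleteSpace H]
    (ε : ℝ) (A : H →L[ℂ] H) : Set ℂ :=
  spectrum ℂ A ∪ {z : ℂ | z ∉ spectrum ℂ A ∧ 1 / ε < ‖resolvent A z‖}

/-!
For `z ∉ σ(A)` let `d = dist(z, σ(A))` and `Q = (z - D)⁻¹ N`. Since `D` is normal with
`σ(D) = σ(A)`, `‖(z - D)⁻¹‖ ≤ 1/d`, hence `s_k(Q) ≤ (ν/d) ẇ̄_k` with `ν = |N|_ẇ̄`. As `Q` is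
compact and quasi-nilpotent, the hypothesis on `C` bounds `‖Q^{2k}‖`, and the Neumann series
`(1 - Q)⁻¹ = (1 + Q) ∑ (Q²)^k` gives `‖(1 - Q)⁻¹‖ ≤ F_ẇ̄(ν/d)`. Because
`z - A = (z - D)(1 - Q)`, this yields `‖(z - A)⁻¹‖ ≤ F_ẇ̄(ν/d)/d`. For `z ∈ σ(B)` the
perturbation `B` of `A` forces `‖(z - A)⁻¹‖ ‖A - B‖ ≥ 1`, i.e. `ν/‖A - B‖ ≤ F̃_ẇ̄(ν/d)`, and
monotonicity of `F̃_ẇ̄` turns this into `d ≤ ν / F̃_ẇ̄⁻¹(ν/‖A - B‖)`.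
-/

section SingularNumbers

universe u v w

variable {E : Type u} {F : Type v} {G : Type w} [NormedAddCommGroup E] [NormedSpace ℂ E]
  [NormedAddCommGroup F] [NormedSpace ℂ F] [NormedAddCommGroup G] [NormedSpace ℂ G]

lemma sNum_nonneg (k : ℕ) (A : E →L[ℂ] F) : 0 ≤ sNum k A :=
  Real.sInf_nonneg fun _ ⟨_, _, hc⟩ => hc ▸ norm_nonneg _

lemma sNum_le_norm_sub {k : ℕ} (A T : E →L[ℂ] F)
    (hT : Module.rank ℂ (LinearMap.range (T : E →ₗ[ℂ] F)) < k) : sNum k A ≤ ‖A - T‖ :=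
  csInf_le ⟨0, fun _ ⟨_, _, hc⟩ => hc ▸ norm_nonneg _⟩ ⟨T, hT, rfl⟩

lemma sNum_one (A : E →L[ℂ] F) : sNum 1 A = ‖A‖ := by
  have hrank (T : E →L[ℂ] F) :
      Module.rank ℂ (LinearMap.range (T : E →ₗ[ℂ] F)) < ((1 : ℕ) : Cardinal) ↔ T = 0 := by
    rw [Nat.cast_one, Cardinal.lt_one_iff, Submodule.rank_eq_zero, LinearMap.range_eq_bot,
      ← ContinuousLinearMap.toLinearMap_zero, ContinuousLinearMap.coe_inj]
  simp_rw [sNum, hrank, exists_eq_left, sub_zero, Set.ofPred_eq_eq_singleton, csInf_singleton]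

lemma sNum_comp_le {k : ℕ} (hk : 1 ≤ k) (R : F →L[ℂ] G) (A : E →L[ℂ] F) :
    sNum k (R.comp A) ≤ ‖R‖ * sNum k A := by
  conv_rhs => rw [sNum, ← smul_eq_mul, ← Real.sInf_smul_of_nonneg (norm_nonneg R)]
  refine le_csInf (Set.Nonempty.smul_set ⟨‖A‖, 0, ?_, by simp⟩) ?_
  · simp only [ContinuousLinearMap.toLinearMap_zero, LinearMap.rank_zero, Nat.cast_pos]; omega
  rintro _ ⟨_, ⟨T, hT, rfl⟩, rfl⟩
  calc sNum k (R.comp A) ≤ ‖R.comp A - R.comp T‖ :=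
        sNum_le_norm_sub _ _ <| by
          have h := (LinearMap.lift_rank_comp_le_right (T : E →ₗ[ℂ] F) (R : F →ₗ[ℂ] G)).trans_lt
            (Cardinal.lift_lt.mpr hT)
          rwa [Cardinal.lift_natCast, ← Cardinal.lift_natCast.{v}, Cardinal.lift_lt] at h
    _ ≤ ‖R‖ * ‖A - T‖ := by
        rw [← ContinuousLinearMap.comp_sub]; exact ContinuousLinearMap.opNorm_comp_le _ _

lemma sNum_le_gaugeE_mul {v : ℕ → ℝ} {A : E →L[ℂ] F} (hA : 0 < gaugeE v A) {k : ℕ}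
    (hk : 1 ≤ k) : sNum k A ≤ gaugeE v A * v k := by
  set S := {M : ℝ | 0 ≤ M ∧ ∀ k, 1 ≤ k → sNum k A ≤ M * v k}
  have hS : S.Nonempty := Set.nonempty_iff_ne_empty.mpr fun h => by
    simp [gaugeE, S, h] at hA
  have hclosed : IsClosed S := by
    simp only [S, Set.ofPred_and, Set.ofPred_forall]
    exact isClosed_Ici.inter <| isClosed_iInter fun k => isClosed_iInter fun _ =>
      isClosed_le continuous_const (continuous_id.mul continuous_const)
  exact (hclosed.csInf_mem hS ⟨0, fun _ h => h.1⟩).2 k hk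

end SingularNumbers

lemma gmean_nonneg {w : ℕ → ℝ} (hw : IsWeight w) (k : ℕ) : 0 ≤ gmean w k :=
  Real.rpow_nonneg (Finset.prod_nonneg fun n hn => hw.2.1 n (Finset.mem_Icc.mp hn).1) _

open Finset in
lemma tendsto_gmean_zero {w : ℕ → ℝ} (hw : IsWeight w) : Tendsto (gmean w) atTop (𝓝 0) := by
  have hmean : Tendsto (fun k : ℕ => (k : ℝ)⁻¹ * ∑ i ∈ range k, w (i + 1)) atTop (𝓝 0) :=
    ((tendsto_add_atTop_iff_nat 1).mpr hw.2.2).cesaro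
  refine tendsto_of_tendsto_of_tendsto_of_le_of_le' tendsto_const_nhds hmean
    (Eventually.of_forall (gmean_nonneg hw)) ?_
  filter_upwards [eventually_ge_atTop 1] with k hk
  have hamgm := Real.geom_mean_le_arith_mean (Icc 1 k) (fun _ => 1) w (fun _ _ => zero_le_one)
    (by
      simp only [sum_const, Nat.card_Icc, add_tsub_cancel_right, nsmul_eq_mul, mul_one,
        Nat.cast_pos]
      omega) fun n hn => hw.2.1 n (mem_Icc.mp hn).1
  simp only [Real.rpow_one, one_mul, sum_const, Nat.card_Icc, add_tsub_cancel_right,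
    nsmul_eq_mul, mul_one] at hamgm
  have hsum : ∑ n ∈ Icc 1 k, w n = ∑ i ∈ range k, w (i + 1) := by
    rw [← Ico_add_one_right_eq_Icc, sum_Ico_eq_sum_range, add_tsub_cancel_right]
    simp only [add_comm]
  rwa [gmean, one_div, ← div_eq_inv_mul, ← hsum]

lemma tendsto_dbl {u : ℕ → ℝ} {l : ℝ} (hu : Tendsto u atTop (𝓝 l)) :
    Tendsto (dbl u) atTop (𝓝 l) :=
  hu.comp <| tendsto_atTop_atTop.mpr fun b => ⟨2 * b, fun k hk => by omega⟩

open Finset in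
lemma summable_prod_Icc_of_tendsto_zero {a : ℕ → ℝ} (ha : Tendsto a atTop (𝓝 0)) :
    Summable fun k => ∏ n ∈ Icc 1 (k + 1), a n := by
  refine summable_of_ratio_norm_eventually_le (r := 1 / 2) (by norm_num) ?_
  have hsmall : ∀ᶠ k in atTop, ‖a (k + 2)‖ ≤ 1 / 2 :=
    (tendsto_add_atTop_iff_nat 2).mpr ha |>.norm |>.eventually_le_const (by norm_num)
  filter_upwards [hsmall] with k hk
  rw [prod_Icc_succ_top (by omega), norm_mul, mul_comm]
  exact mul_le_mul_of_nonneg_right hk (norm_nonneg _)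

open Finset in
lemma summable_Fw_series {v : ℕ → ℝ} (hv : Tendsto v atTop (𝓝 0)) (x : ℝ) :
    Summable fun k => (∏ n ∈ Icc 1 (k + 1), v n) ^ 2 * x ^ (2 * (k + 1)) := by
  have hterm (k : ℕ) : (∏ n ∈ Icc 1 (k + 1), v n) ^ 2 * x ^ (2 * (k + 1)) =
      ∏ n ∈ Icc 1 (k + 1), (v n * x) ^ 2 := by
    rw [prod_pow, prod_mul_distrib, prod_const, Nat.card_Icc, mul_pow, ← pow_mul, mul_comm 2]
    rfl
  simp_rw [hterm]
  refine summable_prod_Icc_of_tendsto_zero ?_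
  simpa using (hv.mul_const x).pow 2

lemma tsum_Fw_series_nonneg (C : ℝ) (v : ℕ → ℝ) (r : ℝ) :
    0 ≤ ∑' k : ℕ, (∏ n ∈ Finset.Icc 1 (k + 1), v n) ^ 2 * (C * r) ^ (2 * (k + 1)) :=
  tsum_nonneg fun _ => mul_nonneg (sq_nonneg _) ((even_two_mul _).pow_nonneg _)

lemma one_le_Fw {C : ℝ} {v : ℕ → ℝ} (hv1 : 0 ≤ v 1) {r : ℝ} (hr : 0 ≤ r) : 1 ≤ Fw C v r := by
  rw [Fw]
  nlinarith [mul_nonneg hr hv1, tsum_Fw_series_nonneg C v r]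

lemma Fw_monotoneOn {C : ℝ} {v : ℕ → ℝ} (hv1 : 0 ≤ v 1) (hv : Tendsto v atTop (𝓝 0)) :
    MonotoneOn (Fw C v) (Set.Ici 0) := by
  intro a ha b hb hab
  have hsq : (C * a) ^ 2 ≤ (C * b) ^ 2 := by
    rw [mul_pow, mul_pow]
    exact mul_le_mul_of_nonneg_left (pow_le_pow_left₀ ha hab 2) (sq_nonneg C)
  have hseries : ∑' k : ℕ, (∏ n ∈ Finset.Icc 1 (k + 1), v n) ^ 2 * (C * a) ^ (2 * (k + 1)) ≤
      ∑' k : ℕ, (∏ n ∈ Finset.Icc 1 (k + 1), v n) ^ 2 * (C * b) ^ (2 * (k + 1)) := by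
    refine Summable.tsum_le_tsum (fun k => ?_) (summable_Fw_series hv _) (summable_Fw_series hv _)
    rw [pow_mul, pow_mul]
    gcongr
  unfold Fw
  gcongr
  · exact add_nonneg zero_le_one (tsum_Fw_series_nonneg C v a)
  · exact add_nonneg zero_le_one (mul_nonneg hb hv1)

lemma Ftilde_strictMonoOn {C : ℝ} {v : ℕ → ℝ} (hv1 : 0 ≤ v 1) (hv : Tendsto v atTop (𝓝 0)) :
    StrictMonoOn (Ftilde C v) (Set.Ici 0) := by
  intro a ha b hb hab
  have h1 := one_le_Fw (C := C) hv1 hb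
  have h2 := Fw_monotoneOn (C := C) hv1 hv ha hb hab.le
  simp only [Ftilde]
  nlinarith [Set.mem_Ici.mp ha]

lemma le_mul_inv_of_le_Fw_mul {C : ℝ} {v : ℕ → ℝ} (hv1 : 0 ≤ v 1) (hv : Tendsto v atTop (𝓝 0))
    {G : ℝ → ℝ} (hG : ∀ y, 0 ≤ y → 0 ≤ G y ∧ Ftilde C v (G y) = y)
    {d ν δ : ℝ} (hd : 0 < d) (hν : 0 < ν) (hδ : 0 < δ) (h : d ≤ Fw C v (ν / d) * δ) :
    d ≤ ν * (G (ν / δ))⁻¹ := by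
  set r := ν / d
  have hr : 0 < r := div_pos hν hd
  obtain ⟨hG0, hGy⟩ := hG (ν / δ) (div_pos hν hδ).le
  have hy : ν / δ ≤ Ftilde C v r := by
    rw [div_le_iff₀ hδ, Ftilde, mul_assoc, ← div_mul_cancel₀ ν hd.ne']
    exact mul_le_mul_of_nonneg_left h hr.le
  have hGr : G (ν / δ) ≤ r :=
    (Ftilde_strictMonoOn hv1 hv).le_iff_le hG0 (Set.mem_Ici.mpr hr.le) |>.mp (hGy ▸ hy)
  have hGpos : 0 < G (ν / δ) := hG0.lt_of_ne fun h0 =>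
    (div_pos hν hδ).ne (by rw [← hGy, ← h0, Ftilde, zero_mul])
  rw [← div_eq_mul_inv, le_div_iff₀ hGpos]
  calc d * G (ν / δ) ≤ d * r := mul_le_mul_of_nonneg_left hGr hd.le
    _ = ν := mul_div_cancel₀ ν hd.ne'

lemma norm_resolvent_le_of_isStarNormal {A : Type*} [CStarAlgebra A] {a : A} [IsStarNormal a]
    {z : ℂ} {d : ℝ} (hd : 0 < d) (h : ∀ μ ∈ spectrum ℂ a, d ≤ ‖z - μ‖) :
    ‖resolvent a z‖ ≤ d⁻¹ := by
  have hne : ∀ μ ∈ spectrum ℂ a, z - μ ≠ 0 := fun μ hμ h0 => by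
    simpa [h0] using hd.trans_le (h μ hμ)
  have hcfc : resolvent a z = cfc (fun μ => (z - μ)⁻¹) a := by
    rw [cfc_inv (fun μ => z - μ) a hne, cfc_sub .., cfc_const z a, cfc_id' ℂ a, resolvent]
  rw [hcfc]
  refine norm_cfc_le (inv_nonneg.mpr hd.le) fun μ hμ => ?_
  rw [norm_inv]
  exact inv_anti₀ hd (h μ hμ)

section Neumann

variable {R : Type*} [NormedRing R] [CompleteSpace R]

lemma isUnit_one_sub_of_summable_norm_pow {x : R} (hs : Summable fun k => ‖x ^ k‖) :
    IsUnit (1 - x) ∧ Ring.inverse (1 - x) = ∑' k, x ^ k := by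
  have hsx : Summable fun k => x ^ k := hs.of_norm
  have hshift : ∑' k, x ^ (k + 1) = ∑' k, x ^ k - 1 := by
    rw [hsx.tsum_eq_zero_add, pow_zero, add_sub_cancel_left]
  have hleft : (1 - x) * ∑' k, x ^ k = 1 := by
    rw [sub_mul, one_mul, ← hsx.tsum_mul_left]
    simp_rw [← pow_succ']
    rw [hshift, sub_sub_cancel]
  have hright : (∑' k, x ^ k) * (1 - x) = 1 := by
    rw [mul_sub, mul_one, ← hsx.tsum_mul_right]
    simp_rw [← pow_succ]
    rw [hshift, sub_sub_cancel]
  let u : Rˣ := ⟨1 - x, ∑' k, x ^ k, hleft, hright⟩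
  exact ⟨u.isUnit, Ring.inverse_unit u⟩

lemma norm_ringInverse_one_sub_le [NormOneClass R] {x : R}
    (hs : Summable fun k => ‖x ^ (2 * k)‖) :
    ‖Ring.inverse (1 - x)‖ ≤ (1 + ‖x‖) * ∑' k, ‖x ^ (2 * k)‖ := by
  simp_rw [pow_mul] at hs ⊢
  obtain ⟨hunit, hinv⟩ := isUnit_one_sub_of_summable_norm_pow hs
  have hfac : 1 - x ^ 2 = (1 - x) * (1 + x) := by noncomm_ring
  have hcomm : Commute (1 - x) (1 + x) := by
    simp only [Commute, SemiconjBy]; noncomm_ring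
  have hunit₁ : IsUnit (1 - x) := (hcomm.isUnit_mul_iff.mp (hfac ▸ hunit)).1
  have hinv₁ : Ring.inverse (1 - x) = (1 + x) * Ring.inverse (1 - x ^ 2) := by
    calc Ring.inverse (1 - x) = Ring.inverse (1 - x) * (1 - x ^ 2) * Ring.inverse (1 - x ^ 2) := by
          rw [Ring.mul_inverse_cancel_right _ _ hunit]
      _ = (1 + x) * Ring.inverse (1 - x ^ 2) := by
          rw [hfac, ← mul_assoc, Ring.inverse_mul_cancel _ hunit₁, one_mul, ← hfac]
  calc ‖Ring.inverse (1 - x)‖ ≤ ‖1 + x‖ * ‖∑' k, (x ^ 2) ^ k‖ := by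
        rw [hinv₁, hinv]; exact norm_mul_le _ _
    _ ≤ (1 + ‖x‖) * ∑' k, ‖(x ^ 2) ^ k‖ := by
        gcongr
        · exact (norm_add_le _ _).trans_eq (by rw [norm_one])
        · exact norm_tsum_le_tsum_norm hs

lemma norm_ringInverse_one_sub_le_Fw [NormOneClass R] {C r : ℝ} {v : ℕ → ℝ}
    (hv : Tendsto v atTop (𝓝 0)) {x : R} (hx : ‖x‖ ≤ r * v 1)
    (hpow : ∀ k, 1 ≤ k → ‖x ^ (2 * k)‖ ≤ (∏ n ∈ Finset.Icc 1 k, v n) ^ 2 * (C * r) ^ (2 * k)) :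
    ‖Ring.inverse (1 - x)‖ ≤ Fw C v r := by
  have hsucc : Summable fun k => ‖x ^ (2 * (k + 1))‖ :=
    (summable_Fw_series hv (C * r)).of_nonneg_of_le (fun _ => norm_nonneg _)
      fun k => hpow (k + 1) (by omega)
  have hs : Summable fun k => ‖x ^ (2 * k)‖ := (summable_nat_add_iff 1).mp hsucc
  refine (norm_ringInverse_one_sub_le hs).trans ?_
  rw [Fw, hs.tsum_eq_zero_add, mul_zero, pow_zero, norm_one]
  have hseries : ∑' k, ‖x ^ (2 * (k + 1))‖ ≤
      ∑' k, (∏ n ∈ Finset.Icc 1 (k + 1), v n) ^ 2 * (C * r) ^ (2 * (k + 1)) :=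
    hsucc.tsum_le_tsum (fun k => hpow (k + 1) (by omega)) (summable_Fw_series hv (C * r))
  gcongr
  linarith [norm_nonneg x]

end Neumann

lemma one_le_norm_resolvent_mul_norm_sub {𝕜 R : Type*} [CommRing 𝕜] [NormedRing R]
    [CompleteSpace R] [Algebra 𝕜 R] {a b : R} {z : 𝕜} (hb : z ∈ spectrum 𝕜 b)
    (ha : z ∉ spectrum 𝕜 a) : 1 ≤ ‖resolvent a z‖ * ‖a - b‖ := by
  by_contra! hlt
  have hunit : IsUnit (algebraMap 𝕜 R z - a) := spectrum.notMem_iff.mp ha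
  have hsmall : ‖resolvent a z * (b - a)‖ < 1 :=
    (norm_mul_le _ _).trans_lt (by rwa [norm_sub_rev])
  have hfac : algebraMap 𝕜 R z - b =
      (algebraMap 𝕜 R z - a) * (1 - resolvent a z * (b - a)) := by
    rw [mul_sub, mul_one, resolvent, Ring.mul_inverse_cancel_left _ _ hunit]
    abel
  exact hb (by
    rw [spectrum.mem_resolventSet_iff, hfac]; exact hunit.mul (Units.oneSub _ hsmall).isUnit)

lemma norm_pow_two_mul_le_of_sNum_le {E : Type*} [NormedAddCommGroup E] [NormedSpace ℂ E]
    {Q : E →L[ℂ] E} {C r : ℝ} {v : ℕ → ℝ}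
    (hQ : ∀ k, 1 ≤ k → ‖Q ^ (2 * k)‖ ≤ C ^ (2 * k) * (∏ n ∈ Finset.Icc 1 k, sNum n Q) ^ 2)
    (hs : ∀ k, 1 ≤ k → sNum k Q ≤ r * v k) {k : ℕ} (hk : 1 ≤ k) :
    ‖Q ^ (2 * k)‖ ≤ (∏ n ∈ Finset.Icc 1 k, v n) ^ 2 * (C * r) ^ (2 * k) := by
  have hprod : ∏ n ∈ Finset.Icc 1 k, sNum n Q ≤ r ^ k * ∏ n ∈ Finset.Icc 1 k, v n := by
    calc ∏ n ∈ Finset.Icc 1 k, sNum n Q ≤ ∏ n ∈ Finset.Icc 1 k, r * v n :=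
          Finset.prod_le_prod (fun n _ => sNum_nonneg n Q)
            fun n hn => hs n (Finset.mem_Icc.mp hn).1
      _ = r ^ k * ∏ n ∈ Finset.Icc 1 k, v n := by
          rw [Finset.prod_mul_distrib, Finset.prod_const, Nat.card_Icc, add_tsub_cancel_right]
  calc ‖Q ^ (2 * k)‖ ≤ C ^ (2 * k) * (r ^ k * ∏ n ∈ Finset.Icc 1 k, v n) ^ 2 := by
        refine (hQ k hk).trans (mul_le_mul_of_nonneg_left ?_ ((even_two_mul k).pow_nonneg C))
        exact pow_le_pow_left₀ (Finset.prod_nonneg fun n _ => sNum_nonneg n Q) hprod 2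
    _ = (∏ n ∈ Finset.Icc 1 k, v n) ^ 2 * (C * r) ^ (2 * k) := by ring

theorem norm_resolvent_le_of_isSchurDecomp {H : Type*} [NormedAddCommGroup H]
    [InnerProductSpace ℂ H] [CompleteSpace H] [Nontrivial H] {v : ℕ → ℝ}
    (hv : Tendsto v atTop (𝓝 0)) {A D N : H →L[ℂ] H} (hS : IsSchurDecomp A D N)
    (hN : 0 < gaugeE v N) {C : ℝ}
    (hDos : ∀ Q : H →L[ℂ] H, IsCompactOperator Q → spectrum ℂ Q = {0} →
      ∀ k, 1 ≤ k → ‖Q ^ (2 * k)‖ ≤ C ^ (2 * k) * (∏ n ∈ Finset.Icc 1 k, sNum n Q) ^ 2)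
    {z : ℂ} {d : ℝ} (hd : 0 < d) (hz : ∀ μ ∈ spectrum ℂ A, d ≤ ‖z - μ‖) :
    ‖resolvent A z‖ ≤ Fw C v (gaugeE v N / d) / d := by
  obtain ⟨hADN, -, hNcomp, hDnormal, -, hspecD, -, hquasi⟩ := hS
  have hzA : z ∉ spectrum ℂ A := fun h => by simpa using hd.trans_le (hz z h)
  have hzD : z ∉ spectrum ℂ D := hspecD ▸ hzA
  set r := gaugeE v N / d
  set R := resolvent D z
  set Q := R * N
  have hR : ‖R‖ ≤ d⁻¹ := norm_resolvent_le_of_isStarNormal hd (hspecD ▸ hz)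
  have hsQ : ∀ k, 1 ≤ k → sNum k Q ≤ r * v k := fun k hk =>
    calc sNum k Q ≤ ‖R‖ * sNum k N := sNum_comp_le hk R N
      _ ≤ d⁻¹ * (gaugeE v N * v k) :=
          mul_le_mul hR (sNum_le_gaugeE_mul hN hk) (sNum_nonneg k N) (inv_nonneg.mpr hd.le)
      _ = r * v k := by rw [← mul_assoc, inv_mul_eq_div]
  have hQ : ‖Q‖ ≤ r * v 1 := sNum_one Q ▸ hsQ 1 le_rfl
  have hinv := norm_ringInverse_one_sub_le_Fw hv hQ fun k hk =>
    norm_pow_two_mul_le_of_sNum_le (hDos Q (hNcomp.clm_comp R) (hquasi z hzA)) hsQ hk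
  have hT : IsUnit (algebraMap ℂ (H →L[ℂ] H) z - D) := spectrum.notMem_iff.mp hzD
  have hfac : algebraMap ℂ (H →L[ℂ] H) z - A = (algebraMap ℂ (H →L[ℂ] H) z - D) * (1 - Q) := by
    rw [mul_sub, mul_one, ← mul_assoc, show (algebraMap ℂ (H →L[ℂ] H) z - D) * R = 1 from
      Ring.mul_inverse_cancel _ hT, one_mul, hADN, sub_sub]
  calc ‖resolvent A z‖ = ‖Ring.inverse (1 - Q) * R‖ := by
        rw [resolvent, hfac, Ring.inverse_mul (Or.inl hT)]; rfl
    _ ≤ Fw C v r * d⁻¹ := (norm_mul_le _ _).trans (mul_le_mul hinv hR (norm_nonneg _)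
          ((norm_nonneg _).trans hinv))
    _ = Fw C v r / d := (div_eq_mul_inv _ _).symm

variable {H : Type*} [NormedAddCommGroup H] [InnerProductSpace ℂ H] [CompleteSpace H]
  [TopologicalSpace.SeparableSpace H]

-- `G` inverts `F̃` on `[0, ∞)`, so the right-hand side is `ν * H_w (‖A - B‖ / ν)`, `ν = |N|_ẇ̄`.
theorem stmt_12_general (w : ℕ → ℝ) (hw : IsWeight w)
    (A D N : H →L[ℂ] H) (hSchur : IsSchurDecomp A D N)
    (hnn : ¬ IsStarNormal A) (hν : 0 < gaugeE (dbl (gmean w)) N)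
    (C : ℝ)
    (hDos : ∀ Q : H →L[ℂ] H, IsCompactOperator Q → spectrum ℂ Q = {0} →
      ∀ k, 1 ≤ k →
        ‖Q ^ (2 * k)‖ ≤ C ^ (2 * k) * (∏ n ∈ Finset.Icc 1 k, sNum n Q) ^ 2)
    (G : ℝ → ℝ)
    (hG₂ : ∀ y, 0 ≤ y → 0 ≤ G y ∧ Ftilde C (dbl (gmean w)) (G y) = y) :
    ∀ B : H →L[ℂ] H,
      specVar (spectrum ℂ B) (spectrum ℂ A) ≤
        gaugeE (dbl (gmean w)) N *
          (G (gaugeE (dbl (gmean w)) N / ‖A - B‖))⁻¹ := by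
  intro B
  have : Nontrivial H := not_subsingleton_iff_nontrivial.mp fun _ =>
    hnn ⟨Subsingleton.elim _ _⟩
  have hv := tendsto_dbl (tendsto_gmean_zero hw)
  have hrhs : 0 ≤ gaugeE (dbl (gmean w)) N * (G (gaugeE (dbl (gmean w)) N / ‖A - B‖))⁻¹ :=
    mul_nonneg hν.le (inv_nonneg.mpr (hG₂ _ (div_nonneg hν.le (norm_nonneg _))).1)
  refine Real.iSup_le (fun ⟨z, hz⟩ => ?_) hrhs
  set d := Metric.infDist z (spectrum ℂ A)
  rcases le_or_gt d 0 with hd | hd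
  · exact hd.trans hrhs
  have hdist : ∀ μ ∈ spectrum ℂ A, d ≤ ‖z - μ‖ := fun μ hμ =>
    dist_eq_norm z μ ▸ Metric.infDist_le_dist_of_mem hμ
  have hzA : z ∉ spectrum ℂ A := fun h => by simpa using hd.trans_le (hdist z h)
  have hres := norm_resolvent_le_of_isSchurDecomp hv hSchur hν hDos hd hdist
  have hpert := (one_le_norm_resolvent_mul_norm_sub hz hzA).trans
    (mul_le_mul_of_nonneg_right hres (norm_nonneg _))
  have hAB : 0 < ‖A - B‖ := pos_of_mul_pos_right (zero_lt_one.trans_le hpert)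
    ((norm_nonneg _).trans hres)
  rw [div_mul_eq_mul_div, one_le_div hd] at hpert
  exact le_mul_inv_of_le_Fw_mul (v := dbl (gmean w)) (gmean_nonneg hw _) hv hG₂ hd hν hAB hpert

/-- spectral variation bound for a non-normal `A ∈ E_w(H)`:
`d̂(σ(B),σ(A)) ≤ ν·H_w(‖A-B‖/ν)` with `ν = |N|_ẇ̄`, where `G` is the inverse
of `F̃_ẇ̄` on `[0,∞)`, so that `ν·H_w(‖A-B‖/ν) = ν·(G(ν/‖A-B‖))⁻¹`. -/
theorem stmt_12 (w : ℕ → ℝ) (hw : IsWeight w)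
    (A D N : H →L[ℂ] H) (hA : MemE w A) (hSchur : IsSchurDecomp A D N)
    (hnn : ¬ IsStarNormal A) (hν : 0 < gaugeE (dbl (gmean w)) N)
    (C : ℝ) (hC : 0 < C)
    (hDos : ∀ Q : H →L[ℂ] H, IsCompactOperator Q → spectrum ℂ Q = {0} →
      ∀ k, 1 ≤ k →
        ‖Q ^ (2 * k)‖ ≤ C ^ (2 * k) * (∏ n ∈ Finset.Icc 1 k, sNum n Q) ^ 2)
    (G : ℝ → ℝ)
    (hG₁ : ∀ r, 0 ≤ r → G (Ftilde C (dbl (gmean w)) r) = r)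
    (hG₂ : ∀ y, 0 ≤ y → 0 ≤ G y ∧ Ftilde C (dbl (gmean w)) (G y) = y) :
    ∀ B : H →L[ℂ] H,
      specVar (spectrum ℂ B) (spectrum ℂ A) ≤
        gaugeE (dbl (gmean w)) N *
          (G (gaugeE (dbl (gmean w)) N / ‖A - B‖))⁻¹ :=
  stmt_12_general w hw A D N hSchur hnn hν C hDos G hG₂
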